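/- W^1 is the unique maximal proper Lie ideal of W(Γ): W^1 is a proper ideal of W(Γ), and every proper ideal of W(Γ) is contained in W^1. -/

import Mathlib

/-- `Wn Γ W B n` is the subspace `W^n`, the span of `{L_{α,i} : α ∈ Γ, i ≥ n}`. -/
noncomputable def Wn (Γ : AddSubgroup ℂ) (W : Type) [LieRing W] [LieAlgebra ℂ W]
    (B : Module.Basis (Γ × ℕ) ℂ W) (n : ℕ) : Submodule ℂ W :=
  Submodule.span ℂ {x : W | ∃ (α : Γ) (i : ℕ), n ≤ i ∧ x = B (α, i)}

/-!
Identify `W(Γ)` with the commutative algebra `ℂ[X][Γ]` via `L_{α,i} ↦ t^α s^i = single α (X ^ i)`.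
The bracket becomes `⁅x, y⁆ = x D y - y D x` for the derivation
`D (t^α f(s)) = t^α (α f + s² f')`, and `W^1` becomes the kernel of `s ↦ 0`, a `D`-stable ideal
and hence a Lie ideal.

Conversely, let the Lie ideal `I` contain some `z` with nonzero constant term. The products
`D g · D h` span the algebra (this is where `Γ ≠ 0` enters), so `z³ x ∈ I` for every `x`: the
largest associative ideal `C` inside `I` is `D`-stable and contains an element with nonzero
constant term. The operators `D - M s - β` preserve `C` and the bound `M` on `s`-degrees, and are
nilpotent on the column `t^β ℂ[s]`; iterating them kills all columns but `t^0 ℂ[s]` and leaves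
some `f(s) ∈ C` with `f(0) ≠ 0`. Finally an `s² d/ds`-stable ideal `(g)` of `ℂ[s]` satisfies
`g ∣ s² g'`, so `g(0) ≠ 0` forces `g' = 0`. Hence `1 ∈ C` and `I = W`.
-/

open Polynomial

namespace Polynomial

variable {K : Type*} [Field K]

theorem ideal_eq_top_of_X_sq_mul_derivative_mem [CharZero K] {C : Ideal K[X]}
    (hC : ∀ f ∈ C, X ^ 2 * derivative f ∈ C) {f : K[X]} (hf : f ∈ C) (hf0 : f.coeff 0 ≠ 0) :
    C = ⊤ := by
  obtain ⟨g, rfl⟩ := Submodule.IsPrincipal.principal C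
  have hgf : g ∣ f := Ideal.mem_span_singleton.mp hf
  have hXg : IsCoprime g (X ^ 2) :=
    (irreducible_X.coprime_iff_not_dvd.mpr fun h => hf0 (X_dvd_iff.mp (h.trans hgf))).pow_left.symm
  have hg' : derivative g = 0 := by
    by_contra h
    have hdvd : g ∣ derivative g := hXg.dvd_of_dvd_mul_left
      (Ideal.mem_span_singleton.mp (hC g (Ideal.mem_span_singleton_self g)))
    exact h (eq_zero_of_dvd_of_natDegree_lt hdvd
      (natDegree_derivative_lt (fun h0 => h (derivative_eq_zero.mpr h0))))
  have hg0 : g ≠ 0 := by rintro rfl; exact hf0 (by simp [zero_dvd_iff.mp hgf])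
  rw [Ideal.span_singleton_eq_top, isUnit_iff_degree_eq_zero, degree_eq_natDegree hg0,
    derivative_eq_zero.mp hg']
  rfl

/-- The term `- M X` cancels the coefficient of `X ^ (M + 1)` in `X ^ 2 * derivative f`, so that
degree `≤ M` is preserved. -/
noncomputable def twistOp (M : ℕ) (c : K) : K[X] →ₗ[K] K[X] :=
  c • LinearMap.id + LinearMap.mulLeft K (X ^ 2) ∘ₗ derivative -
    (M : K) • LinearMap.mulLeft K X

lemma twistOp_apply (M : ℕ) (c : K) (f : K[X]) :
    twistOp M c f = c • f + X ^ 2 * derivative f - (M : K) • (X * f) := rfl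

lemma coeff_twistOp_zero (M : ℕ) (c : K) (f : K[X]) :
    (twistOp M c f).coeff 0 = c * f.coeff 0 := by
  simp [twistOp_apply]

lemma coeff_twistOp_succ (M : ℕ) (c : K) (f : K[X]) (j : ℕ) :
    (twistOp M c f).coeff (j + 1) = c * f.coeff (j + 1) + (j - M) * f.coeff j := by
  rcases j with _ | j
  · simp [twistOp_apply, coeff_X_pow_mul']
    ring
  · simp [twistOp_apply, coeff_X_pow_mul', coeff_derivative]
    ring

lemma natDegree_twistOp_le {M : ℕ} (c : K) {f : K[X]} (hf : f.natDegree ≤ M) :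
    (twistOp M c f).natDegree ≤ M := by
  rw [natDegree_le_iff_coeff_eq_zero] at hf ⊢
  rintro (_ | j) hj
  · omega
  rw [coeff_twistOp_succ, hf (j + 1) hj]
  rcases (Nat.lt_succ_iff.mp hj).lt_or_eq with h | rfl
  · rw [hf j h]; ring
  · ring

lemma natDegree_iterate_twistOp_le {M : ℕ} (k : ℕ) (c : K) {f : K[X]} (hf : f.natDegree ≤ M) :
    ((twistOp M c)^[k] f).natDegree ≤ M := by
  induction k with
  | zero => exact hf
  | succ k ih => rw [Function.iterate_succ_apply']; exact natDegree_twistOp_le c ih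

lemma coeff_zero_iterate_twistOp (M k : ℕ) (c : K) (f : K[X]) :
    ((twistOp M c)^[k] f).coeff 0 = c ^ k * f.coeff 0 := by
  induction k with
  | zero => simp
  | succ k ih => rw [Function.iterate_succ_apply', coeff_twistOp_zero, ih, pow_succ']; ring

lemma iterate_twistOp_zero_eq_zero {M : ℕ} {f : K[X]} (hf : f.natDegree ≤ M) :
    (twistOp M 0)^[M + 1] f = 0 := by
  have hlow : ∀ k, ∀ j < k, ((twistOp M (0 : K))^[k] f).coeff j = 0 := by
    intro k
    induction k with
    | zero => simp
    | succ k ih =>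
      rintro (_ | j) hj
      · rw [Function.iterate_succ_apply', coeff_twistOp_zero, zero_mul]
      · rw [Function.iterate_succ_apply', coeff_twistOp_succ, ih j (by omega), zero_mul,
          mul_zero, add_zero]
  ext j
  rw [coeff_zero]
  rcases Nat.lt_or_ge j (M + 1) with h | h
  · exact hlow _ j h
  · exact natDegree_le_iff_coeff_eq_zero.mp (natDegree_iterate_twistOp_le _ 0 hf) j (by omega)

end Polynomial

open AddMonoidAlgebra

instance {V : Type*} [AddCommGroup V] [Module ℚ V] (Γ : AddSubgroup V) : UniqueSums Γ :=
  UniqueSums.of_injective_addHom Γ.subtype.toAddHom Subtype.coe_injective inferInstance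

variable {Γ : AddSubgroup ℂ}

noncomputable def derLinearMap (Γ : AddSubgroup ℂ) : ℂ[X][Γ] →ₗ[ℂ] ℂ[X][Γ] :=
  Finsupp.lsum ℂ (fun γ : Γ => lsingle γ ∘ₗ
      ((γ : ℂ) • LinearMap.id + LinearMap.mulLeft ℂ (X ^ 2) ∘ₗ derivative)) ∘ₗ
    (coeffLinearEquiv ℂ).toLinearMap

lemma derLinearMap_single (γ : Γ) (f : ℂ[X]) :
    derLinearMap Γ (single γ f) = single γ ((γ : ℂ) • f + X ^ 2 * derivative f) := by
  simp [derLinearMap]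

variable (Γ) in
noncomputable def der : Derivation ℂ (ℂ[X][Γ]) (ℂ[X][Γ]) :=
  Derivation.mk' (derLinearMap Γ) fun a b => by
    induction a using AddMonoidAlgebra.induction_linear with
    | zero => simp
    | add a a' ha ha' => simp only [add_mul, map_add, ha, ha', smul_eq_mul]; ring
    | single γ f =>
      induction b using AddMonoidAlgebra.induction_linear with
      | zero => simp
      | add b b' hb hb' => simp only [mul_add, map_add, hb, hb', smul_eq_mul]; ring
      | single δ g =>
        simp only [single_mul_single, derLinearMap_single, smul_eq_mul, add_comm δ γ,
          ← single_add, derivative_mul, smul_eq_C_mul, AddSubgroup.coe_add, C_add]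
        ring_nf

lemma der_single (γ : Γ) (f : ℂ[X]) :
    der Γ (single γ f) = single γ ((γ : ℂ) • f + X ^ 2 * derivative f) :=
  derLinearMap_single γ f

lemma der_single_X_pow (γ : Γ) (i : ℕ) :
    der Γ (single γ (X ^ i)) =
      (γ : ℂ) • single γ (X ^ i) + (i : ℂ) • single γ (X ^ (i + 1)) := by
  rw [der_single, single_add, smul_single]
  congr 1
  rcases i with _ | i
  · simp
  · rw [derivative_X_pow, smul_single, smul_eq_C_mul]
    push_cast
    ring_nf

lemma coeff_der (a : ℂ[X][Γ]) (γ : Γ) :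
    (der Γ a).coeff γ = (γ : ℂ) • a.coeff γ + X ^ 2 * derivative (a.coeff γ) := by
  induction a using AddMonoidAlgebra.induction_linear with
  | zero => simp
  | add a b ha hb =>
    simp only [map_add, AddMonoidAlgebra.coeff_add, Finsupp.add_apply, ha, hb, smul_add,
      mul_add]
    abel
  | single δ f =>
    rw [der_single]
    simp only [coeff_single, Finsupp.single_apply]
    split_ifs with h
    · rw [h]
    · simp

variable (Γ) in
noncomputable def constCoeff : ℂ[X][Γ] →+* ℂ[Γ] :=
  mapRingHom Γ Polynomial.constantCoeff

lemma constCoeff_eq_zero_iff {a : ℂ[X][Γ]} :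
    constCoeff Γ a = 0 ↔ ∀ γ, (a.coeff γ).coeff 0 = 0 := by
  rw [AddMonoidAlgebra.ext_iff, Finsupp.ext_iff]
  simp [constCoeff, coeff_mapRingHom]

lemma constCoeff_der_eq_zero {a : ℂ[X][Γ]} (ha : constCoeff Γ a = 0) :
    constCoeff Γ (der Γ a) = 0 := by
  rw [constCoeff_eq_zero_iff] at ha ⊢
  intro γ
  simp [coeff_der, ha γ]

noncomputable def twist (M : ℕ) (β : Γ) (a : ℂ[X][Γ]) : ℂ[X][Γ] :=
  der Γ a - (M : ℂ) • (single 0 X * a) - (β : ℂ) • a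

lemma coeff_twist (M : ℕ) (β γ : Γ) (a : ℂ[X][Γ]) :
    (twist M β a).coeff γ = twistOp M ((γ : ℂ) - β) (a.coeff γ) := by
  simp only [twist, AddMonoidAlgebra.coeff_sub, AddMonoidAlgebra.coeff_smul, Finsupp.sub_apply,
    Finsupp.smul_apply, coeff_der, coeff_single_zero_mul, twistOp_apply, sub_smul]
  abel

lemma coeff_iterate_twist (M k : ℕ) (β γ : Γ) (a : ℂ[X][Γ]) :
    ((twist M β)^[k] a).coeff γ = (twistOp M ((γ : ℂ) - β))^[k] (a.coeff γ) := by
  induction k with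
  | zero => rfl
  | succ k ih =>
    rw [Function.iterate_succ_apply', Function.iterate_succ_apply', coeff_twist, ih]

section DerStableIdeal

variable {C : Ideal (ℂ[X][Γ])} (hC : ∀ a ∈ C, der Γ a ∈ C)
include hC

lemma iterate_twist_mem (M k : ℕ) (β : Γ) {a : ℂ[X][Γ]} (ha : a ∈ C) :
    (twist M β)^[k] a ∈ C := by
  induction k with
  | zero => exact ha
  | succ k ih =>
    rw [Function.iterate_succ_apply']
    exact C.sub_mem (C.sub_mem (hC _ ih) (C.smul_of_tower_mem _ (C.mul_mem_left _ ih)))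
      (C.smul_of_tower_mem _ ih)

lemma exists_single_zero_mem {M : ℕ} (S : Finset Γ) :
    ∀ a ∈ C, (∀ γ, (a.coeff γ).natDegree ≤ M) → (a.coeff 0).coeff 0 ≠ 0 →
      (∀ γ ≠ 0, a.coeff γ ≠ 0 → γ ∈ S) → ∃ f : ℂ[X], single 0 f ∈ C ∧ f.coeff 0 ≠ 0 := by
  induction S using Finset.induction_on with
  | empty =>
    intro a ha _ ha0 hS
    refine ⟨a.coeff 0, ?_, ha0⟩
    convert ha using 1
    ext γ : 2
    by_cases hγ : γ = 0
    · simp [hγ]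
    · simp only [coeff_single, Finsupp.single_apply, Ne.symm hγ, if_false]
      by_contra h
      exact Finset.notMem_empty γ (hS γ hγ (Ne.symm h))
  | insert β S _ ih =>
    intro a ha hM ha0 hS
    by_cases hβ : β = 0
    · refine ih a ha hM ha0 fun γ hγ hγa => ?_
      rcases Finset.mem_insert.mp (hS γ hγ hγa) with h | h
      · exact absurd (h.trans hβ) hγ
      · exact h
    -- on the column `β` of degree `≤ M`, `twist M β` is nilpotent; on the other columns it is
    -- invertible, multiplying constant coefficients by `γ - β`
    set b := (twist M β)^[M + 1] a
    have hb : ∀ γ, b.coeff γ = (twistOp M ((γ : ℂ) - β))^[M + 1] (a.coeff γ) := fun γ =>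
      coeff_iterate_twist M (M + 1) β γ a
    refine ih b (iterate_twist_mem hC M _ β ha) (fun γ => ?_) ?_ fun γ hγ hγb => ?_
    · rw [hb]; exact natDegree_iterate_twistOp_le _ _ (hM γ)
    · rw [hb, coeff_zero_iterate_twistOp]
      refine mul_ne_zero (pow_ne_zero _ ?_) ha0
      simpa [sub_eq_zero, eq_comm] using hβ
    · have hγβ : γ ≠ β := by
        rintro rfl
        rw [hb, sub_self] at hγb
        exact hγb (iterate_twistOp_zero_eq_zero (hM γ))
      have hγa : a.coeff γ ≠ 0 := fun h => hγb (by rw [hb, h, iterate_map_zero])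
      exact (Finset.mem_insert.mp (hS γ hγ hγa)).resolve_left hγβ

theorem eq_top_of_der_mem {c : ℂ[X][Γ]} (hc : c ∈ C) (hc0 : constCoeff Γ c ≠ 0) :
    C = ⊤ := by
  obtain ⟨α, hα⟩ : ∃ α, (c.coeff α).coeff 0 ≠ 0 := by
    simpa [constCoeff_eq_zero_iff] using hc0
  set a := single (-α) 1 * c
  have ha : ∀ γ, a.coeff γ = c.coeff (α + γ) := fun γ => by simp [a, coeff_single_mul_apply]
  set M := a.coeff.support.sup fun γ => (a.coeff γ).natDegree
  have hM : ∀ γ, (a.coeff γ).natDegree ≤ M := fun γ => by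
    by_cases hγ : γ ∈ a.coeff.support
    · exact Finset.le_sup (f := fun γ => (a.coeff γ).natDegree) hγ
    · simp [Finsupp.notMem_support_iff.mp hγ]
  obtain ⟨f, hfC, hf0⟩ := exists_single_zero_mem hC a.coeff.support a (C.mul_mem_left _ hc) hM
    (by simpa [ha] using hα) fun γ _ hγ => Finsupp.mem_support_iff.mpr hγ
  have hC' : C.comap singleZeroRingHom = ⊤ := by
    refine ideal_eq_top_of_X_sq_mul_derivative_mem (fun g hg => ?_) hfC hf0
    simpa [der_single] using hC _ hg
  exact Ideal.comap_eq_top_iff.mp hC'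

end DerStableIdeal

variable (Γ) in
noncomputable def monomialBasis : Module.Basis (Γ × ℕ) ℂ (ℂ[X][Γ]) :=
  (basisMonomials ℂ).smulTower' (AddMonoidAlgebra.basis Γ ℂ[X])

lemma monomialBasis_apply (p : Γ × ℕ) : monomialBasis Γ p = single p.1 (X ^ p.2) := by
  simp [monomialBasis, Module.Basis.smulTower'_apply, smul_single, monomial_one_right_eq_X_pow]

lemma monomialBasis_repr (a : ℂ[X][Γ]) (p : Γ × ℕ) :
    (monomialBasis Γ).repr a p = (a.coeff p.1).coeff p.2 :=
  rfl

lemma infinite_of_ne_bot (hΓ : Γ ≠ ⊥) : Infinite Γ := by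
  obtain ⟨ε, hε⟩ := (AddSubgroup.ne_bot_iff_exists_ne_zero).mp hΓ
  refine Infinite.of_injective (fun n : ℕ => n • ε) fun m n h => ?_
  have h' := congrArg (fun x : Γ => (x : ℂ)) h
  simp only [AddSubgroup.coe_nsmul, nsmul_eq_mul] at h'
  exact_mod_cast mul_right_cancel₀ (fun h0 => hε (Subtype.ext h0)) h'

lemma der_single_mul_der_single (β ε : Γ) (k : ℕ) :
    der Γ (single (β - ε) 1) * der Γ (single ε (X ^ k)) =
      ((β : ℂ) - ε) • ((ε : ℂ) • single β (X ^ k) + (k : ℂ) • single β (X ^ (k + 1))) := by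
  have h1 := der_single_X_pow (β - ε) 0
  rw [pow_zero, Nat.cast_zero, zero_smul, add_zero] at h1
  rw [h1, der_single_X_pow]
  simp only [smul_mul_assoc, mul_add, mul_smul_comm, single_mul_single, one_mul, sub_add_cancel,
    AddSubgroup.coe_sub]
  module

theorem span_der_mul_der (hΓ : Γ ≠ ⊥) :
    Submodule.span ℂ {p | ∃ g h, p = der Γ g * der Γ h} = ⊤ := by
  have := infinite_of_ne_bot hΓ
  rw [eq_top_iff, ← (monomialBasis Γ).span_eq, Submodule.span_le]
  rintro _ ⟨⟨β, k⟩, rfl⟩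
  rw [SetLike.mem_coe, monomialBasis_apply]
  obtain ⟨ε₁, hε₁⟩ := Infinite.exists_notMem_finset ({β} : Finset Γ)
  obtain ⟨ε₂, hε₂⟩ := Infinite.exists_notMem_finset ({β, ε₁} : Finset Γ)
  simp only [Finset.mem_insert, Finset.mem_singleton, not_or] at hε₁ hε₂
  have hmem : ∀ ε : Γ, ε ≠ β →
      (ε : ℂ) • single β (X ^ k) + (k : ℂ) • single β (X ^ (k + 1)) ∈
        Submodule.span ℂ {p | ∃ g h, p = der Γ g * der Γ h} := fun ε hε => by
    have hβε : (β : ℂ) - ε ≠ 0 := sub_ne_zero.mpr fun h => hε (Subtype.ext h).symm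
    rw [← inv_smul_smul₀ hβε (_ + _), ← der_single_mul_der_single]
    exact Submodule.smul_mem _ _ (Submodule.subset_span ⟨_, _, rfl⟩)
  have h12 : (ε₁ : ℂ) - ε₂ ≠ 0 := sub_ne_zero.mpr fun h => hε₂.2 (Subtype.ext h).symm
  have := Submodule.smul_mem _ ((ε₁ : ℂ) - ε₂)⁻¹
    (Submodule.sub_mem _ (hmem ε₁ hε₁) (hmem ε₂ hε₂.1))
  convert this using 1
  rw [add_sub_add_right_eq_sub, ← sub_smul, inv_smul_smul₀ h12]

section LieAlgebra

variable {W : Type} [LieRing W] [LieAlgebra ℂ W] (B : Module.Basis (Γ × ℕ) ℂ W)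

def IsWBasis : Prop :=
  ∀ (α β : Γ) (i j : ℕ), ⁅B (α, i), B (β, j)⁆ = ((β : ℂ) - (α : ℂ)) • B (α + β, i + j)
    + ((j : ℂ) - (i : ℂ)) • B (α + β, i + j + 1)

noncomputable def toW : ℂ[X][Γ] ≃ₗ[ℂ] W :=
  (monomialBasis Γ).equiv B (Equiv.refl _)

lemma toW_single (γ : Γ) (i : ℕ) : toW B (single γ (X ^ i)) = B (γ, i) := by
  rw [toW, ← monomialBasis_apply (γ, i), Module.Basis.equiv_apply, Equiv.refl_apply]

lemma repr_toW (a : ℂ[X][Γ]) (p : Γ × ℕ) :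
    B.repr (toW B a) p = (a.coeff p.1).coeff p.2 := by
  simp [toW, Module.Basis.equiv, monomialBasis_repr]

variable {B} in
lemma lie_toW (hB : IsWBasis B) (x y : ℂ[X][Γ]) :
    ⁅toW B x, toW B y⁆ = toW B (x * der Γ y - y * der Γ x) := by
  let lhs : ℂ[X][Γ] →ₗ[ℂ] ℂ[X][Γ] →ₗ[ℂ] W :=
    LinearMap.mk₂ ℂ (fun x y => ⁅toW B x, toW B y⁆)
      (fun _ _ _ => by rw [map_add, add_lie]) (fun _ _ _ => by rw [map_smul, smul_lie])
      (fun _ _ _ => by rw [map_add, lie_add]) (fun _ _ _ => by rw [map_smul, lie_smul])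
  let rhs : ℂ[X][Γ] →ₗ[ℂ] ℂ[X][Γ] →ₗ[ℂ] W :=
    LinearMap.mk₂ ℂ (fun x y => toW B (x * der Γ y - y * der Γ x))
      (fun _ _ _ => by rw [← map_add]; congr 1; simp only [map_add, add_mul, mul_add]; abel)
      (fun _ _ _ => by
        rw [← map_smul]; congr 1
        simp only [Derivation.map_smul, smul_mul_assoc, mul_smul_comm, smul_sub])
      (fun _ _ _ => by rw [← map_add]; congr 1; simp only [map_add, add_mul, mul_add]; abel)
      (fun _ _ _ => by
        rw [← map_smul]; congr 1
        simp only [Derivation.map_smul, smul_mul_assoc, mul_smul_comm, smul_sub])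
  have : lhs = rhs := by
    refine LinearMap.ext_basis (monomialBasis Γ) (monomialBasis Γ) fun ⟨α, i⟩ ⟨β, j⟩ => ?_
    simp only [lhs, rhs, LinearMap.mk₂_apply, monomialBasis_apply, toW_single, hB α β i j,
      der_single_X_pow]
    simp only [mul_add, mul_smul_comm, single_mul_single, ← pow_add, map_sub, map_add, map_smul,
      toW_single, add_comm β α]
    rw [show j + (i + 1) = i + j + 1 by omega, show j + i = i + j by omega,
      show i + (j + 1) = i + j + 1 by omega, sub_smul, sub_smul]
    abel
  exact LinearMap.congr_fun₂ this x y

lemma mem_Wn_one_iff {y : W} : y ∈ Wn Γ W B 1 ↔ constCoeff Γ ((toW B).symm y) = 0 := by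
  have hset : {x : W | ∃ (α : Γ) (i : ℕ), 1 ≤ i ∧ x = B (α, i)} = B '' {p | 1 ≤ p.2} := by
    ext x
    simp [eq_comm]
  rw [Wn, hset, Module.Basis.mem_span_image, constCoeff_eq_zero_iff]
  obtain ⟨a, rfl⟩ := (toW B).surjective y
  simp only [LinearEquiv.symm_apply_apply, Set.subset_def, Finset.mem_coe,
    Finsupp.mem_support_iff, repr_toW, Set.mem_ofPred_eq, Prod.forall]
  refine ⟨fun h γ => by_contra fun h0 => absurd (h γ 0 h0) (by omega), fun h γ i hi => ?_⟩
  rcases i with _ | i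
  · exact absurd (h γ) hi
  · omega

end LieAlgebra

section LieIdeal

variable {W : Type} [LieRing W] [LieAlgebra ℂ W] {B : Module.Basis (Γ × ℕ) ℂ W}
  (hB : IsWBasis B) (I : LieIdeal ℂ W)

variable (B) in
def idealCore : Ideal (ℂ[X][Γ]) where
  carrier := {a | ∀ x, toW B (a * x) ∈ I}
  add_mem' ha hb x := by rw [add_mul, map_add]; exact add_mem (ha x) (hb x)
  zero_mem' x := by rw [zero_mul, map_zero]; exact zero_mem I
  smul_mem' c a ha x := by rw [smul_eq_mul, mul_assoc, mul_left_comm]; exact ha (c * x)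

include hB

lemma toW_bracket_mem {z : ℂ[X][Γ]} (hz : toW B z ∈ I) (x : ℂ[X][Γ]) :
    toW B (x * der Γ z - z * der Γ x) ∈ I := by
  rw [← lie_toW hB]
  exact lie_mem_right ℂ W I _ _ hz

lemma toW_der_mem {z : ℂ[X][Γ]} (hz : toW B z ∈ I) : toW B (der Γ z) ∈ I := by
  simpa using toW_bracket_mem hB I hz 1

lemma toW_mul_mul_der_mem {y y' : ℂ[X][Γ]} (hy : toW B y ∈ I)
    (hy' : toW B y' ∈ I) (g : ℂ[X][Γ]) : toW B (y * y' * der Γ g) ∈ I := by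
  have hsum := add_mem (toW_bracket_mem hB I hy' (g * y)) (toW_bracket_mem hB I hy (g * y'))
  have key : (g * y * der Γ y' - y' * der Γ (g * y)) + (g * y' * der Γ y - y * der Γ (g * y')) =
      -(2 : ℂ) • (y * y' * der Γ g) := by
    simp only [Derivation.leibniz, smul_eq_mul, neg_smul, two_smul]
    ring
  rw [← map_add, key, map_smul] at hsum
  simpa [smul_smul] using I.smul_mem (-(2 : ℂ))⁻¹ hsum

lemma toW_pow_three_mul_mem (hΓ : Γ ≠ ⊥) {z : ℂ[X][Γ]} (hz : toW B z ∈ I)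
    (x : ℂ[X][Γ]) : toW B (z ^ 3 * x) ∈ I := by
  have hspan : Submodule.span ℂ {p | ∃ g h, p = der Γ g * der Γ h} ≤
      ((I : Submodule ℂ W).comap (toW B : ℂ[X][Γ] →ₗ[ℂ] W)).comap
        (LinearMap.mulLeft ℂ (z ^ 3)) := by
    rw [Submodule.span_le]
    rintro _ ⟨g, h, rfl⟩
    rw [SetLike.mem_coe, Submodule.mem_comap, Submodule.mem_comap, LinearMap.mulLeft_apply,
      LinearEquiv.coe_coe,
      show z ^ 3 * (der Γ g * der Γ h) = z * (z * z * der Γ h) * der Γ g by ring]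
    exact toW_mul_mul_der_mem hB I hz (toW_mul_mul_der_mem hB I hz hz h) g
  exact hspan (span_der_mul_der hΓ ▸ Submodule.mem_top)

lemma der_mem_idealCore {a : ℂ[X][Γ]} (ha : a ∈ idealCore B I) :
    der Γ a ∈ idealCore B I := by
  intro x
  have h := sub_mem (toW_der_mem hB I (ha x)) (ha (der Γ x))
  rwa [← map_sub, Derivation.leibniz, smul_eq_mul, smul_eq_mul, add_sub_cancel_left,
    mul_comm] at h

theorem le_Wn_one_of_ne_top (hΓ : Γ ≠ ⊥) (hI : (I : Submodule ℂ W) ≠ ⊤) :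
    (I : Submodule ℂ W) ≤ Wn Γ W B 1 := by
  intro y hy
  rw [mem_Wn_one_iff]
  by_contra hy0
  set z := (toW B).symm y
  have hz : toW B z ∈ I := by simpa [z] using hy
  have hcore : idealCore B I = ⊤ :=
    eq_top_of_der_mem (fun _ => der_mem_idealCore hB I) (c := z ^ 3)
      (toW_pow_three_mul_mem hB I hΓ hz) (by rw [map_pow]; exact pow_ne_zero _ hy0)
  refine hI (eq_top_iff.mpr fun w _ => ?_)
  simpa using (hcore ▸ Submodule.mem_top : (1 : ℂ[X][Γ]) ∈ idealCore B I)
    ((toW B).symm w)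

end LieIdeal

section WnOne

variable {W : Type} [LieRing W] [LieAlgebra ℂ W] {B : Module.Basis (Γ × ℕ) ℂ W}

theorem lie_mem_Wn_one (hB : IsWBasis B) (x : W) {y : W} (hy : y ∈ Wn Γ W B 1) :
    ⁅x, y⁆ ∈ Wn Γ W B 1 := by
  obtain ⟨x, rfl⟩ := (toW B).surjective x
  obtain ⟨y, rfl⟩ := (toW B).surjective y
  rw [mem_Wn_one_iff, LinearEquiv.symm_apply_apply] at hy
  rw [lie_toW hB, mem_Wn_one_iff, LinearEquiv.symm_apply_apply, map_sub, map_mul, map_mul,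
    constCoeff_der_eq_zero hy, hy, mul_zero, zero_mul, sub_zero]

theorem Wn_one_ne_top : Wn Γ W B 1 ≠ ⊤ := by
  intro h
  have h0 := (mem_Wn_one_iff B).mp (h ▸ Submodule.mem_top : B (0, 0) ∈ Wn Γ W B 1)
  rw [← toW_single, pow_zero, LinearEquiv.symm_apply_apply, ← one_def, map_one] at h0
  exact one_ne_zero h0

end WnOne

theorem stmt4 (Γ : AddSubgroup ℂ) (hΓ : Γ ≠ ⊥)
    (W : Type) [LieRing W] [LieAlgebra ℂ W] (B : Module.Basis (Γ × ℕ) ℂ W)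
    (hB : ∀ (α β : Γ) (i j : ℕ),
      ⁅B (α, i), B (β, j)⁆ = ((β : ℂ) - (α : ℂ)) • B (α + β, i + j)
        + ((j : ℂ) - (i : ℂ)) • B (α + β, i + j + 1)) :
    -- `W^1` is an ideal
    (∀ (x y : W), y ∈ Wn Γ W B 1 → ⁅x, y⁆ ∈ Wn Γ W B 1) ∧
    -- `W^1` is proper
    Wn Γ W B 1 ≠ ⊤ ∧
    -- every proper Lie ideal is contained in `W^1`
    (∀ I : LieIdeal ℂ W, (I : Submodule ℂ W) ≠ ⊤ → (I : Submodule ℂ W) ≤ Wn Γ W B 1) :=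
  ⟨fun x _ hy => lie_mem_Wn_one hB x hy, Wn_one_ne_top,
    fun I hI => le_Wn_one_of_ne_top hB I hΓ hI⟩
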